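/- For all a₁, a₂ ∈ ℝ and λ ≠ 0, the linear map ψ_λ(x,y,z,w) = (λ·x, λ²·y, λ³·z, w) is a bijection from 𝔤(λ²·a₁, λ⁴·a₂) to 𝔤(a₁, a₂) satisfying ψ_λ([u,v]) = [ψ_λ(u), ψ_λ(v)], where the bracket on the source is that of 𝔤(λ²·a₁, λ⁴·a₂) and the bracket on the target is that of 𝔤(a₁, a₂). In particular, 𝔤(a₁, a₂) and 𝔤(a₁/λ², a₂/λ⁴) are isomorphic Lie algebras, reflecting the scaling relation λ·𝖢₃,₃(a₁,a₂) = 𝖢₃,₃(a₁/λ², a₂/λ⁴). -/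

import Mathlib

open Matrix

/-- The cross product on `ℝ³`. -/
def cross (x y : Fin 3 → ℝ) : Fin 3 → ℝ :=
  ![x 1 * y 2 - x 2 * y 1, x 2 * y 0 - x 0 * y 2, x 0 * y 1 - x 1 * y 0]

abbrev V3 := Fin 3 → ℝ

/-- The underlying space `ℝ³ × ℝ³ × ℝ³ × ℝ³` of `𝔤(a₁, a₂)`. -/
abbrev G4 := V3 × V3 × V3 × V3

/-- The bracket of `𝔤(a₁, a₂)`, the Lie algebra of the isometry group of the
sub-Riemannian model space `𝖢₃,₃(a₁,a₂)`. -/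
def gBracket (a₁ a₂ : ℝ) (u v : G4) : G4 :=
  let x₁ := u.1; let y₁ := u.2.1; let z₁ := u.2.2.1; let w₁ := u.2.2.2
  let x₂ := v.1; let y₂ := v.2.1; let z₂ := v.2.2.1; let w₂ := v.2.2.2
  ( cross w₁ x₂ + cross x₁ w₂ + a₂ • (cross y₁ z₂ + cross z₁ y₂),
    cross w₁ y₂ + cross y₁ w₂ + cross x₁ x₂
      + a₁ • (cross x₁ z₂ + cross z₁ x₂ + cross y₁ y₂ + a₁ • cross z₁ z₂)
      + a₂ • cross z₁ z₂,
    cross w₁ z₂ + cross z₁ w₂ + cross x₁ y₂ + cross y₁ x₂ + a₁ • (cross y₁ z₂ + cross z₁ y₂),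
    cross w₁ w₂ + a₂ • (cross x₁ z₂ + cross z₁ x₂ + cross y₁ y₂ + a₁ • cross z₁ z₂) )

/-! Give `x, y, z, w` the weights `1, 2, 3, 0` and `a₁, a₂` the weights `2, 4`. Every term of the
bracket is then homogeneous of the weight of its component, and since the cross product is
bilinear, `ψ_λ` multiplies each term by `λ` to the power of its weight. -/

theorem cross_eq_crossProduct (x y : V3) : cross x y = x ⨯₃ y := rfl

theorem cross_smul_left (a : ℝ) (x y : V3) : cross (a • x) y = a • cross x y := by
  rw [cross_eq_crossProduct, LinearMap.map_smul₂]
  rfl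

theorem cross_smul_right (a : ℝ) (x y : V3) : cross x (a • y) = a • cross x y := by
  rw [cross_eq_crossProduct, map_smul]
  rfl

def dilate (lam : ℝ) (u : G4) : G4 := (lam • u.1, lam ^ 2 • u.2.1, lam ^ 3 • u.2.2.1, u.2.2.2)

theorem dilate_bijective {lam : ℝ} (hlam : lam ≠ 0) : Function.Bijective (dilate lam) := by
  have smul_bijective {c : ℝ} (hc : c ≠ 0) : Function.Bijective (c • · : V3 → V3) :=
    MulAction.bijective (Units.mk0 c hc)
  exact (smul_bijective hlam).prodMap ((smul_bijective (pow_ne_zero 2 hlam)).prodMap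
    ((smul_bijective (pow_ne_zero 3 hlam)).prodMap Function.bijective_id))

theorem dilate_gBracket (a₁ a₂ lam : ℝ) (u v : G4) :
    dilate lam (gBracket (lam ^ 2 * a₁) (lam ^ 4 * a₂) u v) =
      gBracket a₁ a₂ (dilate lam u) (dilate lam v) := by
  simp only [dilate, gBracket, Prod.mk.injEq, cross_smul_left, cross_smul_right]
  refine ⟨?_, ?_, ?_, ?_⟩ <;> module

/-- For `λ ≠ 0`, the map `ψ_λ(x,y,z,w) = (λ·x, λ²·y, λ³·z, w)` is a Lie algebra
isomorphism from `𝔤(λ²·a₁, λ⁴·a₂)` onto `𝔤(a₁, a₂)`, reflecting the scaling relation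
`λ·𝖢₃,₃(a₁,a₂) = 𝖢₃,₃(a₁/λ², a₂/λ⁴)`. -/
theorem stmt_19 (a₁ a₂ lam : ℝ) (hlam : lam ≠ 0) :
    let ψ : G4 → G4 := fun u => (lam • u.1, lam ^ 2 • u.2.1, lam ^ 3 • u.2.2.1, u.2.2.2)
    Function.Bijective ψ ∧
      ∀ u v : G4,
        ψ (gBracket (lam ^ 2 * a₁) (lam ^ 4 * a₂) u v) = gBracket a₁ a₂ (ψ u) (ψ v) :=
  ⟨dilate_bijective hlam, dilate_gBracket a₁ a₂ lam⟩
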